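/- arXiv:2403.18527 — 3 statements merged into one kernel-verified Lean document; each statement's English description precedes it below -/
import Mathlib

section
/- Let 0 < c₁ ≤ c₂ and C ≥ 0, and define ℓ : [0,∞) → ℝ by ℓ(t) = ½(√(t + c₁) + √(t + c₂) − C)². Then for every t ≥ 0, 2·t·ℓ''(t) + ℓ'(t) ≤ ½(3 + √(c₂/c₁)). -/
/-!
With `g t = √(t + c₁) + √(t + c₂) - C` and `ℓ = g² / 2`, one has
`2tℓ'' + ℓ' = 2t g'² + g (2t g'' + g')`. For `s = √(t + c)` the bracket contributes
`2t (-1/(4s³)) + 1/(2s) = c/(2s³) ≥ 0`, so `C ≥ 0` lets us replace `g` by `s₁ + s₂`.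
The resulting expression in `s₁ ≤ s₂` equals `3/2 + s₂/(2s₁)` minus two nonnegative terms,
and `s₂/s₁ = √((t + c₂)/(t + c₁)) ≤ √(c₂/c₁)`.
-/

open Real Topology

section Derivatives

variable {c x : ℝ}

theorem hasDerivAt_sqrt_add_const (hx : 0 < x + c) :
    HasDerivAt (fun y => √(y + c)) (1 / (2 * √(x + c))) x := by
  simpa [Function.comp_def] using
    (Real.hasDerivAt_sqrt hx.ne').comp x ((hasDerivAt_id x).add_const c)

theorem hasDerivAt_one_div_two_mul_sqrt_add_const (hx : 0 < x + c) :
    HasDerivAt (fun y => 1 / (2 * √(y + c))) (-(1 / (4 * √(x + c) ^ 3))) x := by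
  have hs : 0 < √(x + c) := Real.sqrt_pos.2 hx
  have := ((hasDerivAt_sqrt_add_const hx).const_mul 2).fun_inv (by positivity)
  simp only [one_div] at this ⊢
  exact this.congr_deriv (by field_simp; ring)

theorem hasDerivAt_half_sq {g : ℝ → ℝ} {g' : ℝ} (hg : HasDerivAt g g' x) :
    HasDerivAt (fun y => 1 / 2 * g y ^ 2) (g x * g') x :=
  ((hg.fun_pow 2).const_mul (1 / 2 : ℝ)).congr_deriv (by norm_num; ring)

theorem deriv_deriv_half_sq {g g' : ℝ → ℝ} {g'' : ℝ}
    (hg : ∀ᶠ y in 𝓝 x, HasDerivAt g (g' y) y) (hg' : HasDerivAt g' g'' x) :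
    deriv (deriv fun y => 1 / 2 * g y ^ 2) x = g' x ^ 2 + g x * g'' := by
  have hderiv : deriv (fun y => 1 / 2 * g y ^ 2) =ᶠ[𝓝 x] fun y => g y * g' y :=
    hg.mono fun y hy => (hasDerivAt_half_sq hy).deriv
  rw [hderiv.deriv_eq]
  exact (hg.self_of_nhds.mul hg').deriv.trans (by ring)

end Derivatives

section Algebra

variable {s s₁ s₂ t : ℝ}

theorem two_mul_neg_one_div_add_one_div_nonneg (hs : 0 < s) (ht : t ≤ s ^ 2) :
    0 ≤ 2 * t * -(1 / (4 * s ^ 3)) + 1 / (2 * s) := by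
  have hexpr : 2 * t * -(1 / (4 * s ^ 3)) + 1 / (2 * s) = (s ^ 2 - t) / (2 * s ^ 3) := by
    field_simp
    ring
  rw [hexpr]
  exact div_nonneg (sub_nonneg.2 ht) (by positivity)

theorem two_mul_hess_add_grad_eq (hs₁ : 0 < s₁) (hs₂ : 0 < s₂) :
    2 * t * (1 / (2 * s₁) + 1 / (2 * s₂)) ^ 2 +
        (s₁ + s₂) * (2 * t * (-(1 / (4 * s₁ ^ 3)) + -(1 / (4 * s₂ ^ 3))) +
          (1 / (2 * s₁) + 1 / (2 * s₂))) =
      3 / 2 + s₂ / (2 * s₁) - (s₂ - s₁) / (2 * s₂) -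
        t * (s₂ ^ 2 - s₁ ^ 2) ^ 2 / (2 * s₁ ^ 3 * s₂ ^ 3) := by
  field_simp
  ring

theorem two_mul_hess_add_grad_le (hs₁ : 0 < s₁) (h₁₂ : s₁ ≤ s₂) (ht : 0 ≤ t)
    (hts₁ : t ≤ s₁ ^ 2) {C : ℝ} (hC : 0 ≤ C) :
    2 * t * ((1 / (2 * s₁) + 1 / (2 * s₂)) ^ 2 +
        (s₁ + s₂ - C) * (-(1 / (4 * s₁ ^ 3)) + -(1 / (4 * s₂ ^ 3)))) +
      (s₁ + s₂ - C) * (1 / (2 * s₁) + 1 / (2 * s₂)) ≤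
      3 / 2 + s₂ / (2 * s₁) := by
  have hs₂ : 0 < s₂ := hs₁.trans_le h₁₂
  have hts₂ : t ≤ s₂ ^ 2 := hts₁.trans (pow_le_pow_left₀ hs₁.le h₁₂ 2)
  have hbracket : 0 ≤ 2 * t * (-(1 / (4 * s₁ ^ 3)) + -(1 / (4 * s₂ ^ 3))) +
      (1 / (2 * s₁) + 1 / (2 * s₂)) := by
    linarith [two_mul_neg_one_div_add_one_div_nonneg hs₁ hts₁,
      two_mul_neg_one_div_add_one_div_nonneg hs₂ hts₂]
  have hslack :
      0 ≤ (s₂ - s₁) / (2 * s₂) + t * (s₂ ^ 2 - s₁ ^ 2) ^ 2 / (2 * s₁ ^ 3 * s₂ ^ 3) := by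
    have : 0 ≤ s₂ - s₁ := sub_nonneg.2 h₁₂
    positivity
  calc _ = 2 * t * (1 / (2 * s₁) + 1 / (2 * s₂)) ^ 2 + (s₁ + s₂ - C) *
          (2 * t * (-(1 / (4 * s₁ ^ 3)) + -(1 / (4 * s₂ ^ 3))) +
            (1 / (2 * s₁) + 1 / (2 * s₂))) := by ring
    _ ≤ 2 * t * (1 / (2 * s₁) + 1 / (2 * s₂)) ^ 2 + (s₁ + s₂) *
          (2 * t * (-(1 / (4 * s₁ ^ 3)) + -(1 / (4 * s₂ ^ 3))) +
            (1 / (2 * s₁) + 1 / (2 * s₂))) := by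
      gcongr
      linarith
    _ ≤ 3 / 2 + s₂ / (2 * s₁) := by
      rw [two_mul_hess_add_grad_eq hs₁ hs₂]
      linarith

end Algebra

theorem sqrt_add_div_sqrt_add_le_sqrt_div {c₁ c₂ t : ℝ} (hc₁ : 0 < c₁)
    (hc₂ : c₁ ≤ c₂) (ht : 0 ≤ t) : √(t + c₂) / √(t + c₁) ≤ √(c₂ / c₁) := by
  rw [← Real.sqrt_div' _ (by linarith)]
  refine Real.sqrt_le_sqrt ?_
  rw [div_le_div_iff₀ (by linarith) hc₁]
  nlinarith

theorem stmt_4 (c₁ c₂ C : ℝ) (hc₁ : 0 < c₁) (hc₂ : c₁ ≤ c₂) (hC : 0 ≤ C)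
    (ℓ : ℝ → ℝ)
    (hℓ : ℓ = fun t => (1 / 2) * (Real.sqrt (t + c₁) + Real.sqrt (t + c₂) - C) ^ 2) :
    ∀ t : ℝ, 0 ≤ t →
      2 * t * deriv (deriv ℓ) t + deriv ℓ t ≤ (1 / 2) * (3 + Real.sqrt (c₂ / c₁)) := by
  intro t ht
  have hg : ∀ y, -c₁ < y → HasDerivAt (fun y => √(y + c₁) + √(y + c₂) - C)
      (1 / (2 * √(y + c₁)) + 1 / (2 * √(y + c₂))) y := fun y hy =>
    ((hasDerivAt_sqrt_add_const (by linarith)).add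
      (hasDerivAt_sqrt_add_const (by linarith))).sub_const C
  have ht₁ : 0 < t + c₁ := by linarith
  have hg' := (hasDerivAt_one_div_two_mul_sqrt_add_const ht₁).add
    (hasDerivAt_one_div_two_mul_sqrt_add_const (by linarith : 0 < t + c₂))
  subst hℓ
  rw [deriv_deriv_half_sq (eventually_gt_nhds (by linarith) |>.mono hg) hg',
    (hasDerivAt_half_sq (hg t (by linarith))).deriv]
  calc _ ≤ 3 / 2 + √(t + c₂) / (2 * √(t + c₁)) :=
        two_mul_hess_add_grad_le (Real.sqrt_pos.2 ht₁) (Real.sqrt_le_sqrt (by linarith)) ht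
          (by rw [Real.sq_sqrt ht₁.le]; linarith) hC
    _ = 3 / 2 + 1 / 2 * (√(t + c₂) / √(t + c₁)) := by ring
    _ ≤ 1 / 2 * (3 + √(c₂ / c₁)) := by
      linarith [sqrt_add_div_sqrt_add_le_sqrt_div hc₁ hc₂ ht]
end

section
/- Let ℓᵢ : [0,∞) → ℝ, i = 1,…,m, be continuous functions bounded below with ℓᵢ(t) → ∞ as t → ∞, and let aᵢ ∈ ℂⁿ with A the matrix having rows aᵢ*. Then for any z₀ ∈ ℂⁿ, the function z ↦ Σᵢ ℓᵢ(|⟨aᵢ,z⟩|²) restricted to z₀ + range(A*) has compact sublevel sets. -/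
/-!
The sublevel set is closed since the objective is continuous. Because every `ℓᵢ` is bounded
below, a bound on the sum bounds each `ℓᵢ(|⟨aᵢ, z⟩|²)`, so coercivity bounds each `|⟨aᵢ, z⟩|`
and hence `‖A z‖`. On `z₀ + (ker A)ᗮ` the map `A` is injective up to the translation, hence
anti-Lipschitz in finite dimension, so `z` itself stays bounded.
-/

open scoped InnerProductSpace
open Bornology Metric Filter

theorem Bornology.IsBounded.of_image_of_disjoint_ker {𝕜 E F : Type*}
    [NontriviallyNormedField 𝕜] [CompleteSpace 𝕜]
    [NormedAddCommGroup E] [NormedSpace 𝕜 E] [FiniteDimensional 𝕜 E]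
    [NormedAddCommGroup F] [NormedSpace 𝕜 F]
    (f : E →ₗ[𝕜] F) {K : Submodule 𝕜 E} (hK : Disjoint K (LinearMap.ker f)) (z₀ : E)
    {S : Set E} (hS : ∀ z ∈ S, z - z₀ ∈ K) (hfS : IsBounded (f '' S)) : IsBounded S := by
  obtain ⟨c, -, hc⟩ := (f.domRestrict K).exists_antilipschitzWith
    (LinearMap.ker_eq_bot.mpr (LinearMap.injective_domRestrict_iff.mpr hK))
  obtain ⟨R, hR⟩ := (isBounded_iff_subset_closedBall (f z₀)).mp hfS
  refine (isBounded_iff_subset_closedBall z₀).mpr ⟨c * R, fun z hz => ?_⟩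
  have hfz : dist (f z) (f z₀) ≤ R := hR ⟨z, hz, rfl⟩
  calc dist z z₀ = ‖(⟨z - z₀, hS z hz⟩ : K)‖ := dist_eq_norm z z₀
    _ ≤ c * ‖f (z - z₀)‖ := by simpa using hc.le_mul_dist ⟨z - z₀, hS z hz⟩ 0
    _ ≤ c * R := by
      rw [map_sub, ← dist_eq_norm]
      gcongr

theorem exists_le_of_sum_le_of_tendsto_atTop {ι : Type*} [Fintype ι] {ℓ : ι → ℝ → ℝ}
    {D : Set ℝ} (hbdd : ∀ i, ∃ b : ℝ, ∀ t ∈ D, b ≤ ℓ i t)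
    (hcoercive : ∀ i, Tendsto (ℓ i) atTop atTop) (s : ℝ) :
    ∃ T : ι → ℝ, ∀ x : ι → ℝ, (∀ i, x i ∈ D) → ∑ i, ℓ i (x i) ≤ s → ∀ i, x i ≤ T i := by
  classical
  choose b hb using hbdd
  have hT : ∀ i, ∃ T : ℝ, ∀ t ≥ T, s - ∑ j ∈ Finset.univ.erase i, b j < ℓ i t := fun i =>
    eventually_atTop.mp ((hcoercive i).eventually_gt_atTop _)
  choose T hT using hT
  refine ⟨T, fun x hxD hxs i => le_of_not_gt fun hxi => ?_⟩
  have hrest : ∑ j ∈ Finset.univ.erase i, b j ≤ ∑ j ∈ Finset.univ.erase i, ℓ j (x j) :=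
    Finset.sum_le_sum fun j _ => hb j _ (hxD j)
  have hsplit := Finset.add_sum_erase Finset.univ (fun j => ℓ j (x j)) (Finset.mem_univ i)
  linarith [hT i (x i) hxi.le]

theorem stmt_7 (n m : ℕ) (a : Fin m → EuclideanSpace ℂ (Fin n))
    (A : EuclideanSpace ℂ (Fin n) →L[ℂ] EuclideanSpace ℂ (Fin m))
    (hA : ∀ z i, A z i = ⟪a i, z⟫_ℂ)
    (ℓ : Fin m → ℝ → ℝ)
    (hcont : ∀ i, ContinuousOn (ℓ i) (Set.Ici 0))
    (hbdd : ∀ i, ∃ b : ℝ, ∀ t : ℝ, 0 ≤ t → b ≤ ℓ i t)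
    (hcoercive : ∀ i, Filter.Tendsto (ℓ i) Filter.atTop Filter.atTop)
    (z₀ : EuclideanSpace ℂ (Fin n)) :
    ∀ s : ℝ, IsCompact {z : EuclideanSpace ℂ (Fin n) |
        z - z₀ ∈ (LinearMap.ker A.toLinearMap)ᗮ ∧ ∑ i, ℓ i (‖⟪a i, z⟫_ℂ‖ ^ 2) ≤ s} := by
  intro s
  have hF : Continuous fun z : EuclideanSpace ℂ (Fin n) => ∑ i, ℓ i (‖⟪a i, z⟫_ℂ‖ ^ 2) :=
    continuous_finsetSum _ fun i _ => (hcont i).comp_continuous (by fun_prop)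
      fun z => Set.mem_Ici.mpr (sq_nonneg ‖⟪a i, z⟫_ℂ‖)
  obtain ⟨T, hT⟩ := exists_le_of_sum_le_of_tendsto_atTop (D := Set.Ici 0) hbdd hcoercive s
  refine isCompact_of_isClosed_isBounded ?_ ?_
  · exact ((Submodule.closed_of_finiteDimensional _).preimage (by fun_prop)).inter
      (isClosed_le hF continuous_const)
  · refine IsBounded.of_image_of_disjoint_ker A.toLinearMap
      (Submodule.orthogonal_disjoint _).symm z₀ (fun z hz => hz.1) ?_
    refine isBounded_iff_forall_norm_le.mpr ⟨√(∑ i, T i), ?_⟩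
    rintro _ ⟨z, ⟨-, hzs⟩, rfl⟩
    refine (le_abs_self _).trans (Real.abs_le_sqrt ?_)
    rw [EuclideanSpace.norm_sq_eq]
    exact Finset.sum_le_sum fun i _ => by
      simpa [hA] using
        hT (fun i => ‖⟪a i, z⟫_ℂ‖ ^ 2) (fun i => Set.mem_Ici.mpr (sq_nonneg _)) hzs i
end

section
/- Let aᵢ ∈ ℂⁿ, yᵢ ≥ 0, ε > 0, and M the matrix with rows √(1 + yᵢ/(8ε))·aᵢ*. Then the Wirtinger Hessian of L(z) = Σᵢ (|⟨aᵢ,z⟩|² − yᵢ log(|⟨aᵢ,z⟩|² + ε)) satisfies (v,v̄)*∇²L(z)(v,v̄) ≤ ‖M‖²·‖(v,v̄)‖₂² for all z, v ∈ ℂⁿ. -/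
open scoped InnerProductSpace ComplexConjugate
open Finset

/-! Along a line `t ↦ z + t v`, each summand of `L` is `ℓᵢ(‖cᵢ + t dᵢ‖²)` with `cᵢ = ⟨aᵢ, z⟩`,
`dᵢ = ⟨aᵢ, v⟩` and `ℓᵢ(t) = t - yᵢ log(t + ε)`. Its second derivative at `0` is
`ℓᵢ''(s) (2 Re(c̄ d))² + ℓᵢ'(s) · 2|d|²` with `s = |c|²`; since `(Re(c̄ d))² ≤ s |d|²` and
`ℓᵢ'' ≥ 0`, it is at most `2 (2 s ℓᵢ''(s) + ℓᵢ'(s)) |d|² ≤ 2 (1 + yᵢ/(8ε)) |d|²`. Summing over `i`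
gives `2 ‖M v‖² ≤ ‖M‖² · 2‖v‖²`. -/

lemma norm_add_ofReal_mul_sq (c d : ℂ) (t : ℝ) :
    ‖c + t * d‖ ^ 2 = ‖c‖ ^ 2 + 2 * (conj c * d).re * t + ‖d‖ ^ 2 * t ^ 2 := by
  simp only [Complex.sq_norm, Complex.normSq_apply, Complex.add_re, Complex.add_im,
    Complex.mul_re, Complex.mul_im, Complex.ofReal_re, Complex.ofReal_im,
    Complex.conj_re, Complex.conj_im]
  ring

lemma re_conj_mul_sq_le (c d : ℂ) : (conj c * d).re ^ 2 ≤ ‖c‖ ^ 2 * ‖d‖ ^ 2 := by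
  calc (conj c * d).re ^ 2 ≤ ‖conj c * d‖ ^ 2 := by
        rw [← sq_abs]
        exact pow_le_pow_left₀ (abs_nonneg _) (Complex.abs_re_le_norm _) 2
    _ = ‖c‖ ^ 2 * ‖d‖ ^ 2 := by rw [norm_mul, Complex.norm_conj, mul_pow]

lemma hasDerivAt_norm_add_ofReal_mul_sq (c d : ℂ) (t : ℝ) :
    HasDerivAt (fun t : ℝ => ‖c + t * d‖ ^ 2) (2 * (conj c * d).re + 2 * ‖d‖ ^ 2 * t) t := by
  simp only [norm_add_ofReal_mul_sq]
  refine ((((hasDerivAt_id' t).const_mul _).const_add _).add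
    ((hasDerivAt_pow 2 t).const_mul _)).congr_deriv ?_
  push_cast
  ring

lemma iteratedDeriv_two_eq_of_hasDerivAt {f f' : ℝ → ℝ} {f'' x : ℝ}
    (hf : ∀ t, HasDerivAt f (f' t) t) (hf' : HasDerivAt f' f'' x) :
    iteratedDeriv 2 f x = f'' := by
  have hderiv : deriv f = f' := funext fun t => (hf t).deriv
  rw [iteratedDeriv_succ, iteratedDeriv_one, hderiv, hf'.deriv]

section CompositeHessian

variable {ℓ ℓ' ℓ'' : ℝ → ℝ}

lemma hasDerivAt_comp_norm_add_ofReal_mul_sq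
    (hℓ : ∀ x, 0 ≤ x → HasDerivAt ℓ (ℓ' x) x) (c d : ℂ) (t : ℝ) :
    HasDerivAt (fun t : ℝ => ℓ (‖c + t * d‖ ^ 2))
      (ℓ' (‖c + t * d‖ ^ 2) * (2 * (conj c * d).re + 2 * ‖d‖ ^ 2 * t)) t :=
  (hℓ (‖c + t * d‖ ^ 2) (sq_nonneg _)).comp t (hasDerivAt_norm_add_ofReal_mul_sq c d t)

lemma hasDerivAt_deriv_comp_norm_add_ofReal_mul_sq
    (hℓ' : ∀ x, 0 ≤ x → HasDerivAt ℓ' (ℓ'' x) x) (c d : ℂ) :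
    HasDerivAt (fun t : ℝ => ℓ' (‖c + t * d‖ ^ 2) * (2 * (conj c * d).re + 2 * ‖d‖ ^ 2 * t))
      (ℓ'' (‖c‖ ^ 2) * (2 * (conj c * d).re) ^ 2 + ℓ' (‖c‖ ^ 2) * (2 * ‖d‖ ^ 2)) 0 := by
  have hq := hasDerivAt_norm_add_ofReal_mul_sq c d 0
  have hq₀ : ‖c + ((0 : ℝ) : ℂ) * d‖ ^ 2 = ‖c‖ ^ 2 := by simp
  have hlin : HasDerivAt (fun t : ℝ => 2 * (conj c * d).re + 2 * ‖d‖ ^ 2 * t) (2 * ‖d‖ ^ 2) 0 := by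
    simpa using ((hasDerivAt_id (0 : ℝ)).const_mul (2 * ‖d‖ ^ 2)).const_add (2 * (conj c * d).re)
  have h := ((hℓ' (‖c + ((0 : ℝ) : ℂ) * d‖ ^ 2) (sq_nonneg _)).comp 0 hq).mul hlin
  simp only [Function.comp_apply, hq₀] at h
  refine h.congr_deriv ?_
  ring

lemma composite_second_deriv_le {K : ℝ} (c d : ℂ) (hℓ''_nonneg : 0 ≤ ℓ'' (‖c‖ ^ 2))
    (hK : 2 * ‖c‖ ^ 2 * ℓ'' (‖c‖ ^ 2) + ℓ' (‖c‖ ^ 2) ≤ K) :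
    ℓ'' (‖c‖ ^ 2) * (2 * (conj c * d).re) ^ 2 + ℓ' (‖c‖ ^ 2) * (2 * ‖d‖ ^ 2)
      ≤ 2 * K * ‖d‖ ^ 2 := by
  have hre : (2 * (conj c * d).re) ^ 2 ≤ 4 * ‖c‖ ^ 2 * ‖d‖ ^ 2 := by
    nlinarith [re_conj_mul_sq_le c d]
  calc ℓ'' (‖c‖ ^ 2) * (2 * (conj c * d).re) ^ 2 + ℓ' (‖c‖ ^ 2) * (2 * ‖d‖ ^ 2)
      ≤ ℓ'' (‖c‖ ^ 2) * (4 * ‖c‖ ^ 2 * ‖d‖ ^ 2) + ℓ' (‖c‖ ^ 2) * (2 * ‖d‖ ^ 2) := by gcongr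
    _ = 2 * (2 * ‖c‖ ^ 2 * ℓ'' (‖c‖ ^ 2) + ℓ' (‖c‖ ^ 2)) * ‖d‖ ^ 2 := by ring
    _ ≤ 2 * K * ‖d‖ ^ 2 := by gcongr

end CompositeHessian

section PoissonLoss

noncomputable def poissonLoss (y ε t : ℝ) : ℝ := t - y * Real.log (t + ε)

variable {y ε t : ℝ}

lemma hasDerivAt_poissonLoss (ht : 0 < t + ε) :
    HasDerivAt (poissonLoss y ε) (1 - y / (t + ε)) t := by
  refine (hasDerivAt_id' t).sub ((((hasDerivAt_id' t).add_const ε).log ht.ne').const_mul y)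
    |>.congr_deriv ?_
  ring

lemma hasDerivAt_deriv_poissonLoss (ht : 0 < t + ε) :
    HasDerivAt (fun t => 1 - y / (t + ε)) (y / (t + ε) ^ 2) t := by
  simp only [div_eq_mul_inv]
  refine ((((hasDerivAt_id' t).add_const ε).inv ht.ne').const_mul y).const_sub 1 |>.congr_deriv ?_
  ring

lemma two_mul_deriv2_add_deriv_poissonLoss_le (hy : 0 ≤ y) (hε : 0 < ε) (ht : 0 ≤ t) :
    2 * t * (y / (t + ε) ^ 2) + (1 - y / (t + ε)) ≤ 1 + y / (8 * ε) := by
  have htε : 0 < t + ε := by linarith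
  -- `(t - ε)/(t + ε)²` attains its maximum `1/(8ε)` at `t = 3ε`.
  have hmax : (t - ε) / (t + ε) ^ 2 ≤ 1 / (8 * ε) := by
    rw [div_le_div_iff₀ (by positivity) (by positivity)]
    nlinarith [sq_nonneg (t - 3 * ε)]
  calc 2 * t * (y / (t + ε) ^ 2) + (1 - y / (t + ε)) = 1 + y * ((t - ε) / (t + ε) ^ 2) := by
        field_simp
        ring
    _ ≤ 1 + y * (1 / (8 * ε)) := by gcongr
    _ = 1 + y / (8 * ε) := by ring

end PoissonLoss

/-- Uniform Hessian bound for the regularized Poisson log-likelihood loss (proof of Thm 4.1):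
the Wirtinger Hessian quadratic form, realized as the second derivative at `0` of
`t ↦ L(z + t v)`, is bounded by `‖M‖²·‖(v,v̄)‖₂²` with `‖(v,v̄)‖₂² = 2‖v‖₂²`, where `M` is the
matrix (operator) with rows `√(1 + yᵢ/(8ε))·aᵢ*` and `‖M‖` its spectral norm. -/
theorem stmt_18 (n m : ℕ) (a : Fin m → EuclideanSpace ℂ (Fin n))
    (y : Fin m → ℝ) (hy : ∀ i, 0 ≤ y i) (ε : ℝ) (hε : 0 < ε)
    (M : EuclideanSpace ℂ (Fin n) →L[ℂ] EuclideanSpace ℂ (Fin m))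
    (hM : ∀ z i, M z i = Complex.ofReal (Real.sqrt (1 + y i / (8 * ε))) * ⟪a i, z⟫_ℂ)
    (L : EuclideanSpace ℂ (Fin n) → ℝ)
    (hL : L = fun z => ∑ i, (‖⟪a i, z⟫_ℂ‖ ^ 2 - y i * Real.log (‖⟪a i, z⟫_ℂ‖ ^ 2 + ε))) :
    ∀ z v : EuclideanSpace ℂ (Fin n),
      iteratedDeriv 2 (fun t : ℝ => L (z + t • v)) 0 ≤ ‖M‖ ^ 2 * (2 * ‖v‖ ^ 2) := by
  intro z v
  have hpos : ∀ x, 0 ≤ x → 0 < x + ε := fun x hx => by linarith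
  have hline : (fun t : ℝ => L (z + t • v)) =
      fun t : ℝ => ∑ i, poissonLoss (y i) ε (‖⟪a i, z⟫_ℂ + t * ⟪a i, v⟫_ℂ‖ ^ 2) := by
    funext t
    simp only [hL, poissonLoss, inner_add_right, ← Complex.coe_smul, inner_smul_right]
  have hL' := fun t => HasDerivAt.fun_sum (u := univ) fun i _ =>
    hasDerivAt_comp_norm_add_ofReal_mul_sq (ℓ := poissonLoss (y i) ε)
      (fun x hx => hasDerivAt_poissonLoss (hpos x hx)) ⟪a i, z⟫_ℂ ⟪a i, v⟫_ℂ t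
  have hL'' := HasDerivAt.fun_sum (u := univ) fun i _ =>
    hasDerivAt_deriv_comp_norm_add_ofReal_mul_sq (ℓ' := fun t => 1 - y i / (t + ε))
      (fun x hx => hasDerivAt_deriv_poissonLoss (hpos x hx)) ⟪a i, z⟫_ℂ ⟪a i, v⟫_ℂ
  have hMv : ∀ i, ‖M v i‖ ^ 2 = (1 + y i / (8 * ε)) * ‖⟪a i, v⟫_ℂ‖ ^ 2 := fun i => by
    rw [hM, norm_mul, mul_pow, Complex.norm_real, Real.norm_eq_abs, sq_abs,
      Real.sq_sqrt (by have := hy i; positivity)]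
  rw [hline, iteratedDeriv_two_eq_of_hasDerivAt hL' hL'']
  calc _ ≤ ∑ i, 2 * (1 + y i / (8 * ε)) * ‖⟪a i, v⟫_ℂ‖ ^ 2 :=
        sum_le_sum fun i _ => composite_second_deriv_le (ℓ' := fun t => 1 - y i / (t + ε))
          (ℓ'' := fun t => y i / (t + ε) ^ 2) _ _ (by have := hy i; positivity)
          (two_mul_deriv2_add_deriv_poissonLoss_le (hy i) hε (sq_nonneg _))
    _ = 2 * ‖M v‖ ^ 2 := by simp only [EuclideanSpace.norm_sq_eq, hMv, mul_sum, mul_assoc]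
    _ ≤ 2 * (‖M‖ * ‖v‖) ^ 2 := by gcongr; exact M.le_opNorm v
    _ = ‖M‖ ^ 2 * (2 * ‖v‖ ^ 2) := by ring
end
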